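/- arXiv:2410.22772 — 5 statements merged into one kernel-verified Lean document; each statement's English description precedes it below -/
import Mathlib

section
/- Let S be a nonempty finite set and p : S → ℝ a function with p(x) > 0 for all x ∈ S. For a linear ordering of S given by a bijection σ : Fin |S| → S, define the ordered support Sord(σ) = ∏_{i=0}^{|S|-1} p(σ(i)) / (∑_{j=i}^{|S|-1} p(σ(j))). Then the sum of Sord(σ) over all bijections σ : Fin |S| → S equals 1 (Plackett–Luce normalization). -/
/-!
Condition on the top-ranked element: a ranking of `S` is a first element `x` followed by a
ranking of `S \ {x}`, the first factor of its ordered support is `p x / ∑ p`, and the remaining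
factors are the ordered support of that ranking of `S \ {x}`. By induction on `|S|` the inner
sum over rankings of `S \ {x}` is `1`, leaving `∑ x, p x / ∑ p = 1`.
-/

open Finset

def orderedSupport {S K : Type*} [Semifield K] {n : ℕ} (p : S → K) (σ : Fin n ≃ S) : K :=
  ∏ i, p (σ i) / ∑ j ∈ Ici i, p (σ j)

def finSuccEquivSigma (n : ℕ) (S : Type*) [DecidableEq S] :
    (Σ x : S, Fin n ≃ {y // y ≠ x}) ≃ (Fin (n + 1) ≃ S) :=
  (Equiv.sigmaCongrRight fun x => (Equiv.optionSubtype x).symm).trans <|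
    (Equiv.sigmaFiberEquiv fun e : Option (Fin n) ≃ S => e none).trans <|
      (finSuccEquiv n).symm.equivCongr (Equiv.refl S)

section
variable {S K : Type*} [DecidableEq S] {n : ℕ} (x : S) (τ : Fin n ≃ {y // y ≠ x})

@[simp] lemma finSuccEquivSigma_apply_zero : finSuccEquivSigma n S ⟨x, τ⟩ 0 = x := rfl

@[simp] lemma finSuccEquivSigma_apply_succ (i : Fin n) :
    finSuccEquivSigma n S ⟨x, τ⟩ i.succ = τ i := rfl

lemma orderedSupport_finSuccEquivSigma [Fintype S] [Semifield K] (p : S → K) :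
    orderedSupport p (finSuccEquivSigma n S ⟨x, τ⟩) =
      (p x / ∑ y, p y) * orderedSupport (fun y : {y // y ≠ x} => p y) τ := by
  have hsum : ∑ j, p (finSuccEquivSigma n S ⟨x, τ⟩ j) = ∑ y, p y := Equiv.sum_comp _ p
  have htail (i : Fin n) : ∑ j ∈ Ici i.succ, p (finSuccEquivSigma n S ⟨x, τ⟩ j) =
      ∑ j ∈ Ici i, p (τ j) := by
    rw [← Fin.map_succEmb_Ici, sum_map]
    rfl
  simp only [orderedSupport, Fin.prod_univ_succ, Ici_zero_eq_univ, hsum, htail,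
    finSuccEquivSigma_apply_zero, finSuccEquivSigma_apply_succ]
end

theorem sum_orderedSupport_eq_one {S K : Type*} [Fintype S] [DecidableEq S] [Field K]
    [LinearOrder K] [IsStrictOrderedRing K] {n : ℕ} (hS : Fintype.card S = n) (p : S → K)
    (hp : ∀ x, 0 < p x) : ∑ σ : Fin n ≃ S, orderedSupport p σ = 1 := by
  induction n generalizing S with
  | zero =>
    have : IsEmpty S := Fintype.card_eq_zero_iff.mp hS
    rw [Fintype.sum_subsingleton _ (Equiv.equivOfIsEmpty _ _)]
    exact Fin.prod_univ_zero _
  | succ n ih =>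
    have hrest (x : S) : Fintype.card {y // y ≠ x} = n := by
      rw [Fintype.card_subtype_compl, Fintype.card_subtype_eq, hS, Nat.add_sub_cancel]
    have htotal : 0 < ∑ y, p y :=
      sum_pos (fun y _ => hp y) (univ_nonempty_iff.mpr (Fintype.card_pos_iff.mp (by omega)))
    calc ∑ σ, orderedSupport p σ
        = ∑ x, ∑ τ : Fin n ≃ {y // y ≠ x}, orderedSupport p (finSuccEquivSigma n S ⟨x, τ⟩) := by
          rw [← (finSuccEquivSigma n S).sum_comp, Fintype.sum_sigma]
      _ = ∑ x, p x / ∑ y, p y := by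
          simp only [orderedSupport_finSuccEquivSigma, ← mul_sum,
            ih (hrest _) _ fun y => hp y, mul_one]
      _ = 1 := by rw [← sum_div, div_self htotal.ne']

theorem plackett_luce_normalization_general {S : Type*} [Fintype S] [DecidableEq S]
    (p : S → ℝ) (hp : ∀ x, 0 < p x) :
    ∑ σ : Fin (Fintype.card S) ≃ S,
      ∏ i : Fin (Fintype.card S), p (σ i) / ∑ j ∈ Finset.Ici i, p (σ j) = 1 :=
  sum_orderedSupport_eq_one rfl p hp

theorem plackett_luce_normalization {S : Type*} [Fintype S] [DecidableEq S] [Nonempty S]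
    (p : S → ℝ) (hp : ∀ x, 0 < p x) :
    ∑ σ : Fin (Fintype.card S) ≃ S,
      ∏ i : Fin (Fintype.card S), p (σ i) / ∑ j ∈ Finset.Ici i, p (σ j) = 1 :=
  plackett_luce_normalization_general p hp
end

section
/- Let m : Finset Θ → ℝ be a basic probability assignment on a finite frame Θ (m(∅) = 0, m nonnegative, ∑_{F ⊆ Θ} m(F) = 1), and let p : Θ → ℝ be strictly positive. Define the permutation mass function μ on injective tuples by μ(A) = m(elements of A) · Sord_p(A), where Sord_p(A) = ∏_{i=1}^{|A|} p(β_i)/∑_{j=i}^{|A|} p(β_j). Then ∑_{A ∈ PES(Θ), A ≠ ∅} μ(A) = 1, i.e., μ is a permutation mass function. -/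
/-! Split the orderings of `F` by their first element `a`: the first Plackett–Luce factor
`p a / ∑_{x ∈ F} p x` does not depend on the rest, and the rest ranges over the orderings of
`F.erase a`, so by induction the total is `∑_{a ∈ F} p a / ∑_{x ∈ F} p x = 1`. Summing the
masses over their focal sets and then over the orderings of each focal set gives
`∑_F m F = 1`; the empty tuple is excluded harmlessly because `m ∅ = 0`. -/

/-- Ordered support degree (Plackett–Luce) of a finite ordered tuple. -/
noncomputable def Sord {α : Type*} (p : α → ℝ) : List α → ℝ
  | [] => 1
  | a :: t => (p a / (p a + (t.map p).sum)) * Sord p t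

namespace Finset

variable {α : Type*} [DecidableEq α]

noncomputable def orderings (s : Finset α) : Finset (List α) :=
  s.toList.permutations.toFinset

theorem mem_orderings {s : Finset α} {l : List α} :
    l ∈ s.orderings ↔ l.Nodup ∧ l.toFinset = s := by
  rw [orderings, List.mem_toFinset, List.mem_permutations]
  constructor
  · intro h
    exact ⟨h.nodup_iff.mpr s.nodup_toList, by rw [List.toFinset_eq_of_perm _ _ h, toList_toFinset]⟩
  · rintro ⟨hl, rfl⟩
    exact List.perm_of_nodup_nodup_toFinset_eq hl (nodup_toList _) (toList_toFinset _).symm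

theorem orderings_empty : (∅ : Finset α).orderings = {[]} := by
  simp [orderings]

theorem cons_mem_orderings_iff {s : Finset α} {a : α} {t : List α} :
    a :: t ∈ s.orderings ↔ a ∈ s ∧ t ∈ (s.erase a).orderings := by
  simp only [mem_orderings, List.nodup_cons, List.toFinset_cons]
  constructor
  · rintro ⟨⟨hat, ht⟩, rfl⟩
    exact ⟨mem_insert_self _ _, ht, by rw [erase_insert (by simpa using hat)]⟩
  · rintro ⟨ha, ht, hts⟩
    refine ⟨⟨fun hat => ?_, ht⟩, by rw [hts, insert_erase ha]⟩
    exact notMem_erase a s (hts ▸ List.mem_toFinset.mpr hat)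

theorem sum_orderings_eq_sum_sum_cons {M : Type*} [AddCommMonoid M] {s : Finset α}
    (hs : s.Nonempty) (f : List α → M) :
    ∑ l ∈ s.orderings, f l = ∑ a ∈ s, ∑ t ∈ (s.erase a).orderings, f (a :: t) := by
  rw [sum_sigma']
  symm
  refine sum_bij (fun x _ => x.1 :: x.2) ?_ ?_ ?_ (fun _ _ => rfl)
  · rintro ⟨a, t⟩ hx
    exact cons_mem_orderings_iff.mpr (mem_sigma.mp hx)
  · rintro ⟨a, t⟩ _ ⟨a', t'⟩ _ h
    obtain ⟨rfl, rfl⟩ := List.cons_eq_cons.mp h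
    rfl
  · rintro (_ | ⟨a, t⟩) hl
    · exact absurd (mem_orderings.mp hl).2.symm (by simpa using hs.ne_empty)
    · exact ⟨⟨a, t⟩, mem_sigma.mpr (cons_mem_orderings_iff.mp hl), rfl⟩

end Finset

open Finset

theorem Sord_cons_of_mem_orderings {α : Type*} [DecidableEq α] (p : α → ℝ) {s : Finset α}
    {a : α} (ha : a ∈ s) {t : List α} (ht : t ∈ (s.erase a).orderings) :
    Sord p (a :: t) = (p a / ∑ x ∈ s, p x) * Sord p t := by
  obtain ⟨hnd, hts⟩ := mem_orderings.mp ht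
  rw [Sord, ← List.sum_toFinset p hnd, hts, add_sum_erase s p ha]

theorem sum_Sord_orderings {α : Type*} [DecidableEq α] (p : α → ℝ) (s : Finset α)
    (hp : ∀ x ∈ s, 0 < p x) : ∑ l ∈ s.orderings, Sord p l = 1 := by
  induction s using Finset.strongInduction with
  | H s ih =>
    rcases s.eq_empty_or_nonempty with rfl | hs
    · simp [orderings_empty, Sord]
    have hsum_pos : 0 < ∑ x ∈ s, p x := sum_pos hp hs
    have hhead : ∀ a ∈ s, ∑ t ∈ (s.erase a).orderings, Sord p (a :: t) = p a / ∑ x ∈ s, p x :=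
      fun a ha => by
        rw [sum_congr rfl fun t ht => Sord_cons_of_mem_orderings p ha ht, ← mul_sum,
          ih _ (erase_ssubset ha) fun x hx => hp x (mem_of_mem_erase hx), mul_one]
    rw [sum_orderings_eq_sum_sum_cons hs, sum_congr rfl hhead, ← sum_div,
      div_self hsum_pos.ne']

theorem sum_nodup_toFinset_eq_sum_orderings {α : Type*} [Fintype α] [DecidableEq α]
    {M : Type*} [AddCommMonoid M] (s : Finset α) (f : List α → M) :
    ∑ A : {l : List α // l.Nodup} with A.1.toFinset = s, f A.1 = ∑ l ∈ s.orderings, f l := by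
  refine sum_bij (fun A _ => A.1) ?_ (fun _ _ _ _ => Subtype.ext) ?_ (fun _ _ => rfl)
  · intro A hA
    exact mem_orderings.mpr ⟨A.2, (mem_filter.mp hA).2⟩
  · intro l hl
    obtain ⟨hnd, hls⟩ := mem_orderings.mp hl
    exact ⟨⟨l, hnd⟩, mem_filter.mpr ⟨mem_univ _, hls⟩, rfl⟩

theorem rps_transformation_is_pmf_general {Θ : Type*} [Fintype Θ] [DecidableEq Θ]
    (m : Finset Θ → ℝ) (hm0 : m ∅ = 0)
    (hm1 : ∑ F : Finset Θ, m F = 1)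
    (p : Θ → ℝ) (hp : ∀ x, 0 < p x) :
    ∑ A ∈ Finset.univ.filter (fun A : {l : List Θ // l.Nodup} => A.1 ≠ []),
      m A.1.toFinset * Sord p A.1 = 1 := by
  have hnil : ∀ A : {l : List Θ // l.Nodup}, m A.1.toFinset * Sord p A.1 ≠ 0 → A.1 ≠ [] := by
    rintro A hA hA_nil
    simp [hA_nil, hm0] at hA
  have hfiber : ∀ F : Finset Θ,
      ∑ A : {l : List Θ // l.Nodup} with A.1.toFinset = F, m A.1.toFinset * Sord p A.1 = m F := by
    intro F
    rw [sum_nodup_toFinset_eq_sum_orderings F fun l => m l.toFinset * Sord p l, ← mul_one (m F),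
      ← sum_Sord_orderings p F fun x _ => hp x, mul_sum]
    exact sum_congr rfl fun l hl => by rw [(mem_orderings.mp hl).2]
  rw [sum_filter_of_ne fun A _ => hnil A, ← sum_fiberwise univ (fun A => A.1.toFinset),
    sum_congr rfl fun F _ => hfiber F, hm1]

theorem rps_transformation_is_pmf {Θ : Type*} [Fintype Θ] [DecidableEq Θ]
    (m : Finset Θ → ℝ) (hm0 : m ∅ = 0) (hmnn : ∀ F, 0 ≤ m F)
    (hm1 : ∑ F : Finset Θ, m F = 1)
    (p : Θ → ℝ) (hp : ∀ x, 0 < p x) :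
    ∑ A ∈ Finset.univ.filter (fun A : {l : List Θ // l.Nodup} => A.1 ≠ []),
      m A.1.toFinset * Sord p A.1 = 1 :=
  rps_transformation_is_pmf_general m hm0 hm1 p hp
end

section
/- Let Θ be a finite set, μ_1, μ_2 permutation mass functions on PES(Θ), and suppose the conflict K→ = ∑_{B,C : B ∩→ C = ∅} μ_1(B)·μ_2(C) satisfies K→ < 1. Define the right orthogonal sum μ^R(A) = (1/(1−K→))·∑_{B ∩→ C = A} μ_1(B)·μ_2(C) for A ≠ ∅ and μ^R(∅) = 0, where B ∩→ C is the tuple obtained from C by deleting entries not occurring in B. Then μ^R is a permutation mass function: μ^R ≥ 0 and ∑_{A ∈ PES(Θ)} μ^R(A) = 1. -/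
/-! Each pair `(B, C)` lies in exactly one fibre of `(B, C) ↦ B ∩→ C`, so the unnormalised
masses of all `A` add up to `(∑ μ₁) (∑ μ₂) = 1`. Dropping the fibre over `∅`, whose mass is
`K`, and rescaling by `1 / (1 - K)` leaves total mass `1`. -/

open Finset

/-- `rightInter B C` is the paper's `B ∩→ C`: the entries of `C` that occur in `B`, in `C`'s order. -/
def rightInter {Θ : Type*} [DecidableEq Θ] (B C : {l : List Θ // l.Nodup}) :
    {l : List Θ // l.Nodup} :=
  ⟨C.1.filter (fun x => decide (x ∈ B.1)), C.2.filter _⟩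

theorem rightInter_eq_iff {Θ : Type*} [DecidableEq Θ] {A B C : {l : List Θ // l.Nodup}} :
    rightInter B C = A ↔ C.1.filter (fun x => decide (x ∈ B.1)) = A.1 :=
  Subtype.ext_iff

theorem sum_sum_sum_ite_eq {α β γ M : Type*} [Fintype α] [Fintype β] [Fintype γ]
    [DecidableEq γ] [AddCommMonoid M] (f : α → β → γ) (w : α → β → M) :
    ∑ c, ∑ a, ∑ b, (if f a b = c then w a b else 0) = ∑ a, ∑ b, w a b := by
  rw [sum_comm]
  refine sum_congr rfl fun a _ => ?_
  rw [sum_comm]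
  exact sum_congr rfl fun b _ => Fintype.sum_ite_eq (f a b) (fun _ => w a b)

theorem sum_ite_eq_zero_else_one_div_one_sub_mul {α 𝕜 : Type*} [Fintype α] [DecidableEq α]
    [Field 𝕜] (m : α → 𝕜) (a₀ : α) (hm : ∑ a, m a = 1) (ha₀ : m a₀ ≠ 1) :
    ∑ a, (if a = a₀ then 0 else 1 / (1 - m a₀) * m a) = 1 := by
  have hne : 1 - m a₀ ≠ 0 := sub_ne_zero.mpr ha₀.symm
  rw [Fintype.sum_eq_add_sum_compl a₀] at hm ⊢
  rw [if_pos rfl, zero_add,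
    sum_congr rfl fun a ha => if_neg (by simpa using ha), ← mul_sum]
  field_simp
  linear_combination hm

theorem right_orthogonal_sum_is_pmf_general {Θ : Type*} [Fintype Θ] [DecidableEq Θ]
    (μ₁ μ₂ : {l : List Θ // l.Nodup} → ℝ)
    (hμ₁nn : ∀ A, 0 ≤ μ₁ A)
    (hμ₁1 : ∑ A : {l : List Θ // l.Nodup}, μ₁ A = 1)
    (hμ₂nn : ∀ A, 0 ≤ μ₂ A)
    (hμ₂1 : ∑ A : {l : List Θ // l.Nodup}, μ₂ A = 1)
    (K : ℝ)
    (hK : K = ∑ B : {l : List Θ // l.Nodup}, ∑ C : {l : List Θ // l.Nodup},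
      if C.1.filter (fun x => decide (x ∈ B.1)) = [] then μ₁ B * μ₂ C else 0)
    (hKlt : K < 1)
    (μR : {l : List Θ // l.Nodup} → ℝ)
    (hμR : ∀ A : {l : List Θ // l.Nodup},
      μR A = if A.1 = [] then 0 else
        (1 / (1 - K)) *
          ∑ B : {l : List Θ // l.Nodup}, ∑ C : {l : List Θ // l.Nodup},
            if C.1.filter (fun x => decide (x ∈ B.1)) = A.1 then μ₁ B * μ₂ C else 0) :
    (∀ A, 0 ≤ μR A) ∧ ∑ A : {l : List Θ // l.Nodup}, μR A = 1 := by
  set empty : {l : List Θ // l.Nodup} := ⟨[], List.nodup_nil⟩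
  set m : {l : List Θ // l.Nodup} → ℝ := fun A =>
    ∑ B, ∑ C, if rightInter B C = A then μ₁ B * μ₂ C else 0
  have hm_val : ∀ A, m A = ∑ B, ∑ C,
      if C.1.filter (fun x => decide (x ∈ B.1)) = A.1 then μ₁ B * μ₂ C else 0 := fun A => by
    simp only [m, rightInter_eq_iff]
  have hKm : K = m empty := by rw [hK, hm_val]
  have hm_empty_lt : m empty < 1 := hKm ▸ hKlt
  have hμRm : ∀ A, μR A = if A = empty then 0 else 1 / (1 - m empty) * m A := fun A => by
    rw [hμR A, ← hKm, hm_val]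
    exact if_congr (Subtype.ext_iff : A = empty ↔ _).symm rfl rfl
  have hm_nonneg : ∀ A, 0 ≤ m A := fun A =>
    sum_nonneg fun B _ => sum_nonneg fun C _ => by
      split_ifs
      exacts [mul_nonneg (hμ₁nn B) (hμ₂nn C), le_rfl]
  have hm_sum : ∑ A, m A = 1 := by
    rw [sum_sum_sum_ite_eq, ← sum_mul_sum, hμ₁1, hμ₂1, one_mul]
  refine ⟨fun A => ?_, ?_⟩
  · rw [hμRm A]
    split_ifs
    exacts [le_rfl, mul_nonneg (one_div_nonneg.mpr (by linarith)) (hm_nonneg A)]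
  · simp only [hμRm]
    exact sum_ite_eq_zero_else_one_div_one_sub_mul m empty hm_sum hm_empty_lt.ne

theorem right_orthogonal_sum_is_pmf {Θ : Type*} [Fintype Θ] [DecidableEq Θ]
    (μ₁ μ₂ : {l : List Θ // l.Nodup} → ℝ)
    (hμ₁0 : μ₁ ⟨[], List.nodup_nil⟩ = 0) (hμ₁nn : ∀ A, 0 ≤ μ₁ A)
    (hμ₁1 : ∑ A : {l : List Θ // l.Nodup}, μ₁ A = 1)
    (hμ₂0 : μ₂ ⟨[], List.nodup_nil⟩ = 0) (hμ₂nn : ∀ A, 0 ≤ μ₂ A)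
    (hμ₂1 : ∑ A : {l : List Θ // l.Nodup}, μ₂ A = 1)
    (K : ℝ)
    (hK : K = ∑ B : {l : List Θ // l.Nodup}, ∑ C : {l : List Θ // l.Nodup},
      if C.1.filter (fun x => decide (x ∈ B.1)) = [] then μ₁ B * μ₂ C else 0)
    (hKlt : K < 1)
    (μR : {l : List Θ // l.Nodup} → ℝ)
    (hμR : ∀ A : {l : List Θ // l.Nodup},
      μR A = if A.1 = [] then 0 else
        (1 / (1 - K)) *
          ∑ B : {l : List Θ // l.Nodup}, ∑ C : {l : List Θ // l.Nodup},
            if C.1.filter (fun x => decide (x ∈ B.1)) = A.1 then μ₁ B * μ₂ C else 0) :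
    (∀ A, 0 ≤ μR A) ∧ ∑ A : {l : List Θ // l.Nodup}, μR A = 1 :=
  right_orthogonal_sum_is_pmf_general μ₁ μ₂ hμ₁nn hμ₁1 hμ₂nn hμ₂1 K hK hKlt μR hμR
end

section
/- Let S be a finite set of size n ≥ 2 with strictly positive weights p, and suppose a, b ∈ S with p(a) > p(b). If σ is an ordering of S with a immediately preceding b at positions i, i+1, and σ' is obtained from σ by swapping a and b, then Sord_p(σ) > Sord_p(σ'), where Sord_p(σ) = ∏_{i=1}^{n} p(σ_i)/∑_{j=i}^{n} p(σ_j). -/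
/-!
The numerator `∏ₖ p(σₖ)` of the Plackett–Luce probability does not depend on the ordering.
Swapping the adjacent entries at positions `i`, `j = i + 1` changes only the tail sum starting at
`j`: with `T` the weight after position `j`, it becomes `p(a) + T` instead of `p(b) + T`. So placing
the heavier element first gives the strictly smaller denominator.
-/

open Finset

/-- The Plackett–Luce probability of the ordering whose `k`-th entry has weight `w k`. -/
noncomputable def plackettLuce {ι K : Type*} [Fintype ι] [LinearOrder ι] [LocallyFiniteOrderTop ι]
    [Field K] (w : ι → K) : K :=
  ∏ k, w k / ∑ l ∈ Ici k, w l

lemma plackettLuce_eq_div {ι K : Type*} [Fintype ι] [LinearOrder ι] [LocallyFiniteOrderTop ι]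
    [Field K] (w : ι → K) : plackettLuce w = (∏ k, w k) / ∏ k, ∑ l ∈ Ici k, w l :=
  prod_div_distrib _ _

section

variable {ι K : Type*} [LinearOrder ι] [AddCommMonoid K] {w : ι → K} {i j k : ι}

lemma sum_comp_swap_of_forall_lt {s : Finset ι} (hij : i < j) (hs : ∀ l ∈ s, j < l) :
    ∑ l ∈ s, w (Equiv.swap i j l) = ∑ l ∈ s, w l :=
  sum_congr rfl fun l hl =>
    congrArg w (Equiv.swap_apply_of_ne_of_ne (hij.trans (hs l hl)).ne' (hs l hl).ne')

variable [LocallyFiniteOrderTop ι]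

lemma sum_Ici_comp_swap_of_le (hki : k ≤ i) (hkj : k ≤ j) :
    ∑ l ∈ Ici k, w (Equiv.swap i j l) = ∑ l ∈ Ici k, w l := by
  refine (Equiv.swap i j).sum_comp _ w fun l hl => ?_
  have hl : l = i ∨ l = j := by
    by_contra! h
    exact hl (Equiv.swap_apply_of_ne_of_ne h.1 h.2)
  rcases hl with rfl | rfl <;> simpa

lemma sum_Ici_comp_swap_of_covBy (hij : i ⋖ j) (hkj : k ≠ j) :
    ∑ l ∈ Ici k, w (Equiv.swap i j l) = ∑ l ∈ Ici k, w l := by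
  rcases le_or_gt k i with hki | hik
  · exact sum_Ici_comp_swap_of_le hki (hki.trans hij.le)
  · have hjk : j < k := (hij.ge_of_gt hik).lt_of_ne' hkj
    exact sum_comp_swap_of_forall_lt hij.lt fun l hl => hjk.trans_le (mem_Ici.1 hl)

lemma sum_Ici_lt_sum_Ici_comp_swap [PartialOrder K] [IsOrderedCancelAddMonoid K]
    (hij : i < j) (hw : w j < w i) :
    ∑ l ∈ Ici j, w l < ∑ l ∈ Ici j, w (Equiv.swap i j l) := by
  rw [← Ioi_insert, sum_insert notMem_Ioi_self, sum_insert notMem_Ioi_self,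
    Equiv.swap_apply_right, sum_comp_swap_of_forall_lt hij fun l hl => mem_Ioi.1 hl]
  exact add_lt_add_left hw _

end

theorem plackettLuce_comp_swap_lt {ι K : Type*} [Fintype ι] [LinearOrder ι]
    [LocallyFiniteOrderTop ι] [Field K] [LinearOrder K] [IsStrictOrderedRing K] {w : ι → K}
    {i j : ι} (hw : ∀ k, 0 < w k) (hij : i ⋖ j) (hwij : w j < w i) :
    plackettLuce (w ∘ Equiv.swap i j) < plackettLuce w := by
  have htail_pos (k : ι) : 0 < ∑ l ∈ Ici k, w l :=
    sum_pos (fun l _ => hw l) ⟨k, mem_Ici.2 le_rfl⟩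
  have htail_le (k : ι) : ∑ l ∈ Ici k, w l ≤ ∑ l ∈ Ici k, w (Equiv.swap i j l) := by
    rcases eq_or_ne k j with rfl | hkj
    · exact (sum_Ici_lt_sum_Ici_comp_swap hij.lt hwij).le
    · exact (sum_Ici_comp_swap_of_covBy hij hkj).ge
  rw [plackettLuce_eq_div, plackettLuce_eq_div, Function.comp_def, Equiv.prod_comp]
  exact div_lt_div_of_pos_left (prod_pos fun k _ => hw k) (prod_pos fun k _ => htail_pos k)
    (prod_lt_prod (fun k _ => htail_pos k) (fun k _ => htail_le k)
      ⟨j, mem_univ j, sum_Ici_lt_sum_Ici_comp_swap hij.lt hwij⟩)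

theorem adjacent_swap_decreases_sord_general {S : Type*} [Fintype S] [DecidableEq S]
    (p : S → ℝ) (hp : ∀ x, 0 < p x)
    (a b : S) (hab : p b < p a)
    (σ : Fin (Fintype.card S) ≃ S) (i j : Fin (Fintype.card S))
    (hij : (j : ℕ) = (i : ℕ) + 1) (ha : σ i = a) (hb : σ j = b) :
    (∏ i : Fin (Fintype.card S),
        p ((σ.trans (Equiv.swap a b)) i) /
          ∑ j ∈ Finset.Ici i, p ((σ.trans (Equiv.swap a b)) j)) <
    ∏ i : Fin (Fintype.card S), p (σ i) / ∑ j ∈ Finset.Ici i, p (σ j) := by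
  have hswap (k : Fin (Fintype.card S)) : σ.trans (Equiv.swap a b) k = σ (Equiv.swap i j k) := by
    rw [Equiv.trans_apply, ← ha, ← hb, σ.injective.swap_apply]
  have hcov : i ⋖ j := Fin.covBy_iff.2 (Nat.covBy_iff_add_one_eq.2 hij.symm)
  simp only [hswap]
  exact plackettLuce_comp_swap_lt (w := p ∘ σ) (fun k => hp (σ k)) hcov (by simpa [ha, hb])

theorem adjacent_swap_decreases_sord {S : Type*} [Fintype S] [DecidableEq S]
    (hn : 2 ≤ Fintype.card S)
    (p : S → ℝ) (hp : ∀ x, 0 < p x)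
    (a b : S) (hab : p b < p a)
    (σ : Fin (Fintype.card S) ≃ S) (i j : Fin (Fintype.card S))
    (hij : (j : ℕ) = (i : ℕ) + 1) (ha : σ i = a) (hb : σ j = b) :
    (∏ i : Fin (Fintype.card S),
        p ((σ.trans (Equiv.swap a b)) i) /
          ∑ j ∈ Finset.Ici i, p ((σ.trans (Equiv.swap a b)) j)) <
    ∏ i : Fin (Fintype.card S), p (σ i) / ∑ j ∈ Finset.Ici i, p (σ j) :=
  adjacent_swap_decreases_sord_general p hp a b hab σ i j hij ha hb
end

section
/- Let Θ be a finite set of size n with strictly positive weights p summing to 1. For the ordered support degree Sord_p on full orderings of Θ, the ordering that lists the elements in nonincreasing order of p maximizes Sord_p over all orderings of Θ. -/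
/-!
Every ordering has the same product of numerators `∏ p(τ i) = ∏ p`, so it suffices to show that
the sorted ordering minimises each tail sum `∑_{j ≥ i} p(σ j)`. The tail of `σ` and the tail of
`τ` have the same size, and after removing their common part every element left in the tail of
`σ` is at most every element left in the tail of `τ`, since the latter all come before position
`i` in `σ`.
-/

open Finset

section TailSums

variable {α M : Type*} [AddCommMonoid M] [LinearOrder M] [IsOrderedAddMonoid M] (f : α → M)

theorem Finset.sum_le_sum_of_card_eq_of_forall_le {C D : Finset α} (hcard : #C = #D)
    (h : ∀ x ∈ C, ∀ y ∈ D, f x ≤ f y) : ∑ x ∈ C, f x ≤ ∑ y ∈ D, f y := by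
  obtain rfl | hD := D.eq_empty_or_nonempty
  · rw [card_empty, card_eq_zero] at hcard
    simp [hcard]
  obtain ⟨y₀, hy₀, hy₀_min⟩ := D.exists_min_image f hD
  calc ∑ x ∈ C, f x ≤ #C • f y₀ := sum_le_card_nsmul C f (f y₀) fun x hx => h x hx y₀ hy₀
    _ = #D • f y₀ := by rw [hcard]
    _ ≤ ∑ y ∈ D, f y := card_nsmul_le_sum D f (f y₀) hy₀_min

theorem Finset.sum_le_sum_of_card_eq_of_forall_sdiff_le [DecidableEq α] {A B : Finset α}
    (hcard : #A = #B) (h : ∀ x ∈ A \ B, ∀ y ∈ B \ A, f x ≤ f y) :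
    ∑ x ∈ A, f x ≤ ∑ y ∈ B, f y := by
  rw [← sum_inter_add_sum_sdiff A B f, ← sum_inter_add_sum_sdiff B A f, inter_comm B A]
  refine add_le_add_right (sum_le_sum_of_card_eq_of_forall_le f ?_ h) _
  have hA := card_inter_add_card_sdiff A B
  have hB := card_inter_add_card_sdiff B A
  rw [inter_comm] at hB
  omega

variable {ι : Type*} [LinearOrder ι] [LocallyFiniteOrderTop ι]

theorem Antitone.sum_Ici_le_sum_Ici {σ : ι ≃ α} (hσ : Antitone (f ∘ σ)) (τ : ι ≃ α) (i : ι) :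
    ∑ j ∈ Ici i, f (σ j) ≤ ∑ j ∈ Ici i, f (τ j) := by
  classical
  rw [← sum_image fun _ _ _ _ h => σ.injective h, ← sum_image fun _ _ _ _ h => τ.injective h]
  refine sum_le_sum_of_card_eq_of_forall_sdiff_le f ?_ ?_
  · rw [card_image_of_injective _ σ.injective, card_image_of_injective _ τ.injective]
  intro x hx y hy
  obtain ⟨j, hj, rfl⟩ := mem_image.mp (mem_sdiff.mp hx).1
  obtain ⟨k, rfl⟩ := σ.surjective y
  have hki : k < i :=
    lt_of_not_ge fun hik => (mem_sdiff.mp hy).2 (mem_image_of_mem σ (mem_Ici.mpr hik))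
  exact hσ (hki.le.trans (mem_Ici.mp hj))

end TailSums

theorem Antitone.prod_div_sum_Ici_le {α ι : Type*} [Fintype ι] [LinearOrder ι]
    [LocallyFiniteOrderTop ι] {p : α → ℝ} (hp : ∀ x, 0 < p x) {σ : ι ≃ α}
    (hσ : Antitone (p ∘ σ)) (τ : ι ≃ α) :
    ∏ i, p (τ i) / ∑ j ∈ Ici i, p (τ j) ≤ ∏ i, p (σ i) / ∑ j ∈ Ici i, p (σ j) := by
  have htail_pos (i : ι) : 0 < ∑ j ∈ Ici i, p (σ j) :=
    sum_pos (fun j _ => hp _) ⟨i, mem_Ici.mpr le_rfl⟩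
  have hnum : ∏ i, p (τ i) = ∏ i, p (σ i) :=
    Fintype.prod_equiv (τ.trans σ.symm) _ _ fun i => by simp
  rw [prod_div_distrib, prod_div_distrib, hnum]
  exact div_le_div_of_nonneg_left (prod_pos fun i _ => hp _).le (prod_pos fun i _ => htail_pos i)
    (prod_le_prod (fun i _ => (htail_pos i).le) fun i _ => hσ.sum_Ici_le_sum_Ici p τ i)

theorem sorted_ordering_maximizes_sord_general {S : Type*} [Fintype S]
    (p : S → ℝ) (hp : ∀ x, 0 < p x)
    (σ : Fin (Fintype.card S) ≃ S)
    (hσ : ∀ i j : Fin (Fintype.card S), i ≤ j → p (σ j) ≤ p (σ i)) :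
    ∀ τ : Fin (Fintype.card S) ≃ S,
      (∏ i : Fin (Fintype.card S), p (τ i) / ∑ j ∈ Finset.Ici i, p (τ j)) ≤
      ∏ i : Fin (Fintype.card S), p (σ i) / ∑ j ∈ Finset.Ici i, p (σ j) :=
  Antitone.prod_div_sum_Ici_le hp hσ

theorem sorted_ordering_maximizes_sord {S : Type*} [Fintype S] [DecidableEq S]
    (p : S → ℝ) (hp : ∀ x, 0 < p x) (hp1 : ∑ x : S, p x = 1)
    (σ : Fin (Fintype.card S) ≃ S)
    (hσ : ∀ i j : Fin (Fintype.card S), i ≤ j → p (σ j) ≤ p (σ i)) :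
    ∀ τ : Fin (Fintype.card S) ≃ S,
      (∏ i : Fin (Fintype.card S), p (τ i) / ∑ j ∈ Finset.Ici i, p (τ j)) ≤
      ∏ i : Fin (Fintype.card S), p (σ i) / ∑ j ∈ Finset.Ici i, p (σ j) :=
  sorted_ordering_maximizes_sord_general p hp σ hσ
end
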